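/- arXiv:2605.03161 — 4 statements merged into one kernel-verified Lean document; each statement's English description precedes it below -/
import Mathlib

section
/- Let T = (a, 0) and U = (b, θ) be elements of the group ℝ × (ℝ/2πℤ), with a ≠ 0 and b ≠ 0. If a/b is irrational, then the subgroup generated by T and U is not discrete in ℝ × (ℝ/2πℤ), and it is isomorphic to ℤ². -/
open Real

/-- If `T = (a,0)` and `U = (b,θ)` in `ℝ × (ℝ/2πℤ)` with `a,b ≠ 0` and
`a/b` irrational, then `⟨T,U⟩` is non-discrete and isomorphic to `ℤ²`. -/
theorem stmt0 (a b θ : ℝ) (ha : a ≠ 0) (hb : b ≠ 0) (h : Irrational (a / b)) :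
    ¬ DiscreteTopology
        ↥(AddSubgroup.closure
            ({(a, (0 : AddCircle (2 * π))), (b, (θ : AddCircle (2 * π)))} :
              Set (ℝ × AddCircle (2 * π)))) ∧
      Nonempty
        ((ℤ × ℤ) ≃+
          ↥(AddSubgroup.closure
              ({(a, (0 : AddCircle (2 * π))), (b, (θ : AddCircle (2 * π)))} :
                Set (ℝ × AddCircle (2 * π))))) := by
  haveI : Fact (0 < 2 * π) := ⟨by positivity⟩
  set T : ℝ × AddCircle (2 * π) := (a, (0 : AddCircle (2 * π))) with hT
  set U : ℝ × AddCircle (2 * π) := (b, (θ : AddCircle (2 * π))) with hU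
  set G : AddSubgroup (ℝ × AddCircle (2 * π)) := AddSubgroup.closure {T, U} with hG
  -- key arithmetic lemma from irrationality
  have key : ∀ m n : ℤ, (m : ℝ) * a + (n : ℝ) * b = 0 → m = 0 ∧ n = 0 := by
    intro m n hmn
    by_cases hn : n = 0
    · subst hn
      push_cast at hmn
      have hm : (m : ℝ) = 0 := by
        rcases mul_eq_zero.mp (by linarith : (m : ℝ) * a = 0) with h' | h'
        · exact h'
        · exact absurd h' ha
      exact ⟨by exact_mod_cast hm, rfl⟩
    · exfalso
      have hm : m ≠ 0 := by
        intro hm0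
        subst hm0
        push_cast at hmn
        have : (n : ℝ) = 0 := by
          rcases mul_eq_zero.mp (by linarith : (n : ℝ) * b = 0) with h' | h'
          · exact h'
          · exact absurd h' hb
        exact hn (by exact_mod_cast this)
      apply h
      refine ⟨(-n : ℚ) / (m : ℚ), ?_⟩
      have hmR : (m : ℝ) ≠ 0 := Int.cast_ne_zero.mpr hm
      push_cast
      field_simp
      nlinarith [hmn]
  have hTG : T ∈ G := AddSubgroup.subset_closure (by simp)
  have hUG : U ∈ G := AddSubgroup.subset_closure (by simp)
  constructor
  · -- non-discreteness
    intro hd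
    haveI := hd
    have hclosed : IsClosed (G : Set (ℝ × AddCircle (2 * π))) :=
      AddSubgroup.isClosed_of_discrete
    set K : Set (ℝ × AddCircle (2 * π)) :=
      (G : Set (ℝ × AddCircle (2 * π))) ∩ (Set.Icc (-|a|) |a| ×ˢ Set.univ) with hK
    have hKc : IsCompact K :=
      ((isCompact_Icc.prod isCompact_univ).inter_left hclosed)
    haveI : DiscreteTopology K := DiscreteTopology.of_subset hd Set.inter_subset_left
    have hfin : K.Finite := hKc.finite (isDiscrete_iff_discreteTopology.mpr this)
    -- but K is infinite
    have hinf : K.Infinite := by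
      refine Set.infinite_of_injective_forall_mem
        (f := fun n : ℤ => (-⌊(n : ℝ) * b / a⌋ : ℤ) • T + (n : ℤ) • U) ?_ ?_
      · intro n n' hnn'
        have h1 : ((-⌊(n : ℝ) * b / a⌋ : ℤ) : ℝ) * a + (n : ℝ) * b
            = ((-⌊(n' : ℝ) * b / a⌋ : ℤ) : ℝ) * a + (n' : ℝ) * b := by
          have := congrArg Prod.fst hnn'
          simpa [hT, hU, Prod.fst_add, zsmul_eq_mul] using this
        have h2 : ((-⌊(n : ℝ) * b / a⌋ + ⌊(n' : ℝ) * b / a⌋ : ℤ) : ℝ) * a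
            + ((n - n' : ℤ) : ℝ) * b = 0 := by
          push_cast at h1 ⊢
          linear_combination h1
        have := (key _ _ h2).2
        omega
      · intro n
        constructor
        · exact AddSubgroup.add_mem G (AddSubgroup.zsmul_mem G hTG _)
            (AddSubgroup.zsmul_mem G hUG _)
        · refine Set.mem_prod.mpr ⟨?_, Set.mem_univ _⟩
          have hfst : ((-⌊(n : ℝ) * b / a⌋ : ℤ) • T + (n : ℤ) • U).1
              = a * Int.fract ((n : ℝ) * b / a) := by
            simp only [hT, hU, Prod.fst_add, Prod.smul_fst, zsmul_eq_mul]
            rw [Int.fract]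
            push_cast
            field_simp
            ring
          rw [hfst]
          have h0 : (0 : ℝ) ≤ Int.fract ((n : ℝ) * b / a) := Int.fract_nonneg _
          have h1 : Int.fract ((n : ℝ) * b / a) < 1 := Int.fract_lt_one _
          constructor
          · calc -|a| ≤ -(|a| * Int.fract ((n : ℝ) * b / a)) := by
                  nlinarith [abs_nonneg a]
              _ ≤ a * Int.fract ((n : ℝ) * b / a) := by
                  rcases abs_cases a with ⟨h', _⟩ | ⟨h', _⟩ <;> nlinarith
          · calc a * Int.fract ((n : ℝ) * b / a) ≤ |a| * Int.fract ((n : ℝ) * b / a) := by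
                  rcases abs_cases a with ⟨h', _⟩ | ⟨h', _⟩ <;> nlinarith
              _ ≤ |a| := by nlinarith [abs_nonneg a]
    exact hinf hfin
  · -- isomorphism with ℤ²
    let f : ℤ × ℤ →+ ℝ × AddCircle (2 * π) :=
      { toFun := fun p => p.1 • T + p.2 • U
        map_zero' := by simp
        map_add' := by
          intro p q
          simp only [Prod.fst_add, Prod.snd_add, add_zsmul]
          abel }
    have hinj : Function.Injective f := by
      rw [injective_iff_map_eq_zero]
      intro p hp
      have h1 : (p.1 : ℝ) * a + (p.2 : ℝ) * b = 0 := by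
        have := congrArg Prod.fst hp
        simpa [f, hT, hU, Prod.fst_add, zsmul_eq_mul] using this
      obtain ⟨h2, h3⟩ := key _ _ h1
      exact Prod.ext h2 h3
    have hrange : f.range = G := by
      ext z
      rw [hG, AddSubgroup.mem_closure_pair]
      constructor
      · rintro ⟨p, hp⟩
        exact ⟨p.1, p.2, hp⟩
      · rintro ⟨m, n, hmn⟩
        exact ⟨(m, n), hmn⟩
    exact ⟨(AddMonoidHom.ofInjective hinj).trans (AddEquiv.addSubgroupCongr hrange)⟩
end

section
/- Let T = (a, 0) and U = (b, θ) be elements of the group ℝ × (ℝ/2πℤ), with a ≠ 0 and b ≠ 0. If a/b is rational and θ is a rational multiple of π, then the subgroup generated by T and U is discrete in ℝ × (ℝ/2πℤ) and is not isomorphic to ℤ². -/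
open Real

lemma zmultiples_isClosed (p : ℝ) (hp : p ≠ 0) :
    IsClosed ((AddSubgroup.zmultiples p : AddSubgroup ℝ) : Set ℝ) := by
  have : ((AddSubgroup.zmultiples p : AddSubgroup ℝ) : Set ℝ)
      = (fun x : ℝ => x * p) '' (Set.range ((↑) : ℤ → ℝ)) := by
    ext x
    simp only [SetLike.mem_coe, AddSubgroup.mem_zmultiples_iff, zsmul_eq_mul, Set.mem_image,
      Set.mem_range]
    constructor
    · rintro ⟨k, rfl⟩; exact ⟨k, ⟨k, rfl⟩, rfl⟩
    · rintro ⟨_, ⟨k, rfl⟩, rfl⟩; exact ⟨k, rfl⟩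
  rw [this]
  exact (Homeomorph.mulRight₀ p hp).isClosedMap _ Int.isClosedEmbedding_coe_real.isClosed_range

/-- If `T = (a,0)` and `U = (b,θ)` in `ℝ × (ℝ/2πℤ)` with `a,b ≠ 0`,
`a/b ∈ ℚ` and `θ ∈ πℚ`, then `⟨T,U⟩` is discrete and not isomorphic to `ℤ²`. -/
theorem stmt1 (a b θ : ℝ) (ha : a ≠ 0) (hb : b ≠ 0)
    (hab : ∃ q : ℚ, a / b = (q : ℝ)) (hθ : ∃ q : ℚ, θ = (q : ℝ) * π) :
    DiscreteTopology
        ↥(AddSubgroup.closure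
            ({(a, (0 : AddCircle (2 * π))), (b, (θ : AddCircle (2 * π)))} :
              Set (ℝ × AddCircle (2 * π)))) ∧
      ¬ Nonempty
        ((ℤ × ℤ) ≃+
          ↥(AddSubgroup.closure
              ({(a, (0 : AddCircle (2 * π))), (b, (θ : AddCircle (2 * π)))} :
                Set (ℝ × AddCircle (2 * π))))) := by
  obtain ⟨q, hq⟩ := hab
  obtain ⟨r, hr⟩ := hθ
  have hπ : (0:ℝ) < π := Real.pi_pos
  have h2π : (2*π) ≠ 0 := by positivity
  have haq : a = q * b := by field_simp at hq; linarith
  have hden : ((q.den : ℝ)) ≠ 0 := by exact_mod_cast q.den_nz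
  set c : ℝ := b / (q.den : ℝ) with hc
  have hcne : c ≠ 0 := div_ne_zero hb hden
  have ha' : a = q.num • c := by
    rw [zsmul_eq_mul, hc, haq, Rat.cast_def]
    field_simp
  have hb' : b = (q.den : ℤ) • c := by
    rw [zsmul_eq_mul, hc]
    push_cast
    field_simp
  set N : ℕ := 2 * r.den with hN
  have hNpos : 0 < N := by positivity
  have hNne : (N : ℝ) ≠ 0 := by positivity
  have hrden : ((r.den : ℝ)) ≠ 0 := by exact_mod_cast r.den_nz
  have hNθ : N • ((θ : ℝ) : AddCircle (2*π)) = 0 := by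
    rw [← AddCircle.coe_nsmul]
    have hval : (N : ℕ) • θ = r.num • (2*π) := by
      rw [nsmul_eq_mul, zsmul_eq_mul, hr, hN]
      push_cast
      have : ((r.num : ℝ)) = r * r.den := by
        rw [Rat.cast_def]; field_simp
      rw [this]; ring
    rw [hval, AddCircle.coe_zsmul, AddCircle.coe_period, smul_zero]
  set S := AddSubgroup.closure
      ({(a, (0 : AddCircle (2 * π))), (b, (θ : AddCircle (2 * π)))} :
        Set (ℝ × AddCircle (2 * π))) with hS
  -- Key structural fact about elements of S
  have key : ∀ x ∈ S, x.1 ∈ AddSubgroup.zmultiples c ∧ N • x.2 = 0 := by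
    intro x hx
    refine AddSubgroup.closure_induction ?_ ?_ ?_ ?_ hx
    · rintro y (rfl | rfl)
      · exact ⟨AddSubgroup.mem_zmultiples_iff.2 ⟨q.num, ha'.symm⟩, by simp⟩
      · exact ⟨AddSubgroup.mem_zmultiples_iff.2 ⟨(q.den : ℤ), hb'.symm⟩, hNθ⟩
    · exact ⟨zero_mem _, by simp⟩
    · rintro y z _ _ ⟨hy1, hy2⟩ ⟨hz1, hz2⟩
      exact ⟨add_mem hy1 hz1, by simp [Prod.snd_add, smul_add, hy2, hz2]⟩
    · rintro y _ ⟨hy1, hy2⟩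
      exact ⟨neg_mem hy1, by simp [smul_neg, hy2]⟩
  -- torsion points form a finite set
  have tors : ∀ y : AddCircle (2*π), N • y = 0 →
      y ∈ Set.range (fun k : Fin N => ((((k : ℕ) : ℝ)/(N:ℝ) * (2*π) : ℝ) : AddCircle (2*π))) := by
    intro y hy
    induction y using QuotientAddGroup.induction_on with
    | H x =>
      rw [← AddCircle.coe_nsmul, AddCircle.coe_eq_zero_iff] at hy
      obtain ⟨m, hm⟩ := hy
      have hmodlt : m % (N : ℤ) < (N : ℤ) := Int.emod_lt_of_pos m (by exact_mod_cast hNpos)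
      have hmodnn : 0 ≤ m % (N : ℤ) := Int.emod_nonneg m (by exact_mod_cast hNpos.ne')
      refine ⟨⟨(m % (N : ℤ)).toNat, ?_⟩, ?_⟩
      · omega
      · show (((((m % (N : ℤ)).toNat : ℝ))/(N:ℝ) * (2*π) : ℝ) : AddCircle (2*π)) = (x : AddCircle (2*π))
        rw [QuotientAddGroup.eq]
        refine ⟨m / (N : ℤ), ?_⟩
        have hx : (N:ℝ) * x = (m:ℝ) * (2*π) := by
          rw [zsmul_eq_mul, nsmul_eq_mul] at hm; linarith
        have hdiv : (N:ℝ) * ((m / (N:ℤ) : ℤ):ℝ) + ((m % (N:ℤ) : ℤ):ℝ) = (m:ℝ) := by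
          exact_mod_cast Int.mul_ediv_add_emod m (N:ℤ)
        have htn : (((m % (N : ℤ)).toNat : ℝ)) = ((m % (N:ℤ) : ℤ):ℝ) := by
          exact_mod_cast Int.toNat_of_nonneg hmodnn
        show (m / (N:ℤ) : ℤ) • (2*π) = _
        rw [zsmul_eq_mul, htn]
        field_simp
        nlinarith [hx, hdiv]
  haveI : IsClosed ((AddSubgroup.zmultiples (2*π) : AddSubgroup ℝ) : Set ℝ) :=
    zmultiples_isClosed _ h2π
  haveI hT1 : T1Space (AddCircle (2*π)) := by infer_instance
  constructor
  · -- discreteness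
    rw [discreteTopology_iff_isOpen_singleton_zero]
    have hfin : (Set.range (fun k : Fin N =>
        ((((k : ℕ) : ℝ)/(N:ℝ) * (2*π) : ℝ) : AddCircle (2*π)))).Finite := Set.finite_range _
    set B : Set (ℝ × AddCircle (2*π)) :=
      (Metric.ball (0:ℝ) |c|) ×ˢ ((Set.range (fun k : Fin N =>
        ((((k : ℕ) : ℝ)/(N:ℝ) * (2*π) : ℝ) : AddCircle (2*π))) \ {0})ᶜ) with hB
    have hBopen : IsOpen B :=
      (Metric.isOpen_ball).prod ((hfin.diff).isClosed.isOpen_compl)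
    have heq : ({0} : Set ↥S) = Subtype.val ⁻¹' B := by
      ext x
      simp only [Set.mem_singleton_iff, Set.mem_preimage]
      constructor
      · rintro rfl
        constructor
        · simpa using abs_pos.2 hcne
        · intro hmem
          exact hmem.2 rfl
      · rintro ⟨h1, h2⟩
        obtain ⟨hz, hto⟩ := key (x : ℝ × AddCircle (2*π)) x.2
        obtain ⟨k, hk⟩ := AddSubgroup.mem_zmultiples_iff.1 hz
        have hk0 : k = 0 := by
          by_contra hkne
          have h1' : |(x : ℝ × AddCircle (2*π)).1| < |c| := by
            simpa [Real.dist_eq] using h1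
          rw [← hk, zsmul_eq_mul, abs_mul] at h1'
          have : (1:ℝ) ≤ |(k:ℝ)| := by
            have : (1:ℤ) ≤ |k| := Int.one_le_abs hkne
            exact_mod_cast this
          nlinarith [abs_pos.2 hcne, abs_nonneg ((k:ℝ))]
        have hx1 : (x : ℝ × AddCircle (2*π)).1 = 0 := by
          rw [← hk, hk0, zero_zsmul]
        have hx2 : (x : ℝ × AddCircle (2*π)).2 = 0 := by
          by_contra hne
          exact h2 ⟨tors _ hto, hne⟩
        ext
        · exact hx1
        · exact hx2
    rw [heq]
    exact hBopen.preimage continuous_subtype_val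
  · -- not isomorphic to ℤ²
    rintro ⟨e⟩
    set f : ℤ × ℤ →+ ℝ :=
      (AddMonoidHom.fst ℝ (AddCircle (2*π))).comp
        ((S.subtype).comp e.toAddMonoidHom) with hf
    have hfdef : ∀ z : ℤ × ℤ, f z = ((e z : ℝ × AddCircle (2*π))).1 := fun z => rfl
    have hker : ∀ z : ℤ × ℤ, f z = 0 → z = 0 := by
      intro z hz
      have h2' := (key ((e z : ℝ × AddCircle (2*π))) (e z).2).2
      have hNe : (N : ℕ) • (e z) = 0 := by
        apply Subtype.ext
        have : ((N • e z : ↥S) : ℝ × AddCircle (2*π)) = N • ((e z : ℝ × AddCircle (2*π))) := rfl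
        rw [this]
        ext
        · show N • ((e z : ℝ × AddCircle (2*π))).1 = 0
          rw [← hfdef, hz, smul_zero]
        · exact h2'
      have hNz : (N : ℕ) • z = 0 := by
        have := congrArg e.symm hNe
        simpa [map_nsmul] using this
      have h1 : (N:ℤ) * z.1 = 0 ∧ (N:ℤ) * z.2 = 0 := by
        constructor
        · have := congrArg Prod.fst hNz
          simpa [nsmul_eq_mul] using this
        · have := congrArg Prod.snd hNz
          simpa [nsmul_eq_mul] using this
      have hN0 : (N:ℤ) ≠ 0 := by exact_mod_cast hNpos.ne'
      ext
      · exact (mul_eq_zero.1 h1.1).resolve_left hN0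
      · exact (mul_eq_zero.1 h1.2).resolve_left hN0
    obtain ⟨k, hk⟩ := AddSubgroup.mem_zmultiples_iff.1
      (key ((e (1,0) : ℝ × AddCircle (2*π))) (e (1,0)).2).1
    obtain ⟨l, hl⟩ := AddSubgroup.mem_zmultiples_iff.1
      (key ((e (0,1) : ℝ × AddCircle (2*π))) (e (0,1)).2).1
    rw [← hfdef] at hk hl
    have h0 : f (l • ((1,0) : ℤ × ℤ) - k • ((0,1) : ℤ × ℤ)) = 0 := by
      rw [map_sub, map_zsmul, map_zsmul, ← hk, ← hl, smul_smul, smul_smul, mul_comm, sub_self]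
    have hz := hker _ h0
    have hlk : l = 0 ∧ k = 0 := by
      constructor
      · have := congrArg Prod.fst hz
        simpa using this
      · have := congrArg Prod.snd hz
        have h' : l * 0 - k * 1 = 0 := by simpa [smul_eq_mul] using this
        linarith
    have hcontr := hker (1,0) (by rw [← hk, hlk.2, zero_zsmul])
    have : (1:ℤ) = 0 := congrArg Prod.fst hcontr
    exact one_ne_zero this
end

section
/- Let T = (a, 0) and U = (b, θ) be elements of the group ℝ × (ℝ/2πℤ), with a ≠ 0 and b ≠ 0. If a/b is rational and θ is not a rational multiple of π, then the subgroup generated by T and U is not discrete in ℝ × (ℝ/2πℤ), but it is isomorphic to ℤ². -/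
open Real

/-- If a nonzero integer multiple of `θ` is an integer multiple of `2π`,
then `θ` is a rational multiple of `π`. -/
lemma aux_rat {θ : ℝ} {n k : ℤ} (hn : n ≠ 0) (h : (k : ℝ) * (2 * π) = (n : ℝ) * θ) :
    ∃ q : ℚ, θ = (q : ℝ) * π := by
  refine ⟨2 * k / n, ?_⟩
  have hn' : (n : ℝ) ≠ 0 := Int.cast_ne_zero.mpr hn
  have hq : ((2 * k / n : ℚ) : ℝ) = 2 * (k : ℝ) / (n : ℝ) := by push_cast; ring
  rw [hq]
  field_simp
  linarith

/-- If `α` is not a rational multiple of `π`, the integer multiples of `α` are dense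
in `ℝ/2πℤ`. -/
lemma aux_dense {α : ℝ} (hirr : ∀ q : ℚ, α ≠ (q : ℝ) * π) :
    Dense {x : AddCircle (2 * π) | ∃ m : ℤ, m • ((α : ℝ) : AddCircle (2 * π)) = x} := by
  have hπ : (0 : ℝ) < 2 * π := by positivity
  -- the subgroup of ℝ generated by α and 2π is dense
  have hdense : Dense ((AddSubgroup.closure {α, 2 * π} : AddSubgroup ℝ) : Set ℝ) := by
    rcases AddSubgroup.dense_or_cyclic (AddSubgroup.closure {α, 2 * π}) with h | ⟨c, hc⟩
    · exact h
    · exfalso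
      have hα : α ∈ AddSubgroup.closure ({α, 2 * π} : Set ℝ) :=
        AddSubgroup.subset_closure (by simp)
      have h2π : (2 * π) ∈ AddSubgroup.closure ({α, 2 * π} : Set ℝ) :=
        AddSubgroup.subset_closure (by simp)
      rw [hc, AddSubgroup.mem_closure_singleton] at hα h2π
      obtain ⟨m, hm⟩ := hα
      obtain ⟨k, hk⟩ := h2π
      have hk0 : k ≠ 0 := by
        rintro rfl
        simp at hk
      apply hirr (2 * m / k)
      have hk' : (k : ℝ) ≠ 0 := Int.cast_ne_zero.mpr hk0
      have hm' : (m : ℝ) * c = α := by rw [← hm]; simp [zsmul_eq_mul]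
      have hk'' : (k : ℝ) * c = 2 * π := by rw [← hk]; simp [zsmul_eq_mul]
      have hq : ((2 * m / k : ℚ) : ℝ) = 2 * (m : ℝ) / (k : ℝ) := by push_cast; ring
      have key : α * (k : ℝ) = 2 * (m : ℝ) * π := by
        calc α * (k : ℝ) = ((m : ℝ) * c) * k := by rw [hm']
        _ = (m : ℝ) * ((k : ℝ) * c) := by ring
        _ = (m : ℝ) * (2 * π) := by rw [hk'']
        _ = 2 * (m : ℝ) * π := by ring
      rw [hq]
      field_simp
      linarith [key]
  -- push it down to the circle
  have hcont : Continuous (QuotientAddGroup.mk : ℝ → AddCircle (2 * π)) :=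
    QuotientAddGroup.continuous_mk
  have himg : Dense ((QuotientAddGroup.mk : ℝ → AddCircle (2 * π)) ''
      ((AddSubgroup.closure {α, 2 * π} : AddSubgroup ℝ) : Set ℝ)) :=
    QuotientAddGroup.mk_surjective.denseRange.dense_image hcont hdense
  refine himg.mono ?_
  rintro _ ⟨x, hx, rfl⟩
  rw [SetLike.mem_coe, AddSubgroup.mem_closure_pair] at hx
  obtain ⟨m, n, rfl⟩ := hx
  refine ⟨m, ?_⟩
  have h1 : (QuotientAddGroup.mk (m • α + n • (2 * π)) : AddCircle (2 * π))
      = m • (QuotientAddGroup.mk α : AddCircle (2 * π))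
        + n • (QuotientAddGroup.mk (2 * π) : AddCircle (2 * π)) := by
    rw [← QuotientAddGroup.mk'_apply, map_add, map_zsmul, map_zsmul,
      QuotientAddGroup.mk'_apply, QuotientAddGroup.mk'_apply]
  have h2 : (QuotientAddGroup.mk (2 * π) : AddCircle (2 * π)) = 0 :=
    (QuotientAddGroup.eq_zero_iff _).mpr (AddSubgroup.mem_zmultiples _)
  rw [h1, h2, smul_zero, add_zero]

/-- zsmul commutes with the coercion to the circle. -/
lemma aux_coe_zsmul (k : ℤ) (x : ℝ) :
    k • ((x : ℝ) : AddCircle (2 * π)) = (((k • x : ℝ)) : AddCircle (2 * π)) := by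
  have := map_zsmul (QuotientAddGroup.mk' (AddSubgroup.zmultiples (2 * π))) k x
  rw [QuotientAddGroup.mk'_apply, QuotientAddGroup.mk'_apply] at this
  exact this.symm

/-- If `T = (a,0)` and `U = (b,θ)` in `ℝ × (ℝ/2πℤ)` with `a,b ≠ 0`,
`a/b ∈ ℚ` and `θ ∉ πℚ`, then `⟨T,U⟩` is non-discrete but isomorphic to `ℤ²`. -/
theorem stmt2 (a b θ : ℝ) (ha : a ≠ 0) (hb : b ≠ 0)
    (hab : ∃ q : ℚ, a / b = (q : ℝ)) (hθ : ¬ ∃ q : ℚ, θ = (q : ℝ) * π) :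
    ¬ DiscreteTopology
        ↥(AddSubgroup.closure
            ({(a, (0 : AddCircle (2 * π))), (b, (θ : AddCircle (2 * π)))} :
              Set (ℝ × AddCircle (2 * π)))) ∧
      Nonempty
        ((ℤ × ℤ) ≃+
          ↥(AddSubgroup.closure
              ({(a, (0 : AddCircle (2 * π))), (b, (θ : AddCircle (2 * π)))} :
                Set (ℝ × AddCircle (2 * π))))) := by
  have hπ : (0 : ℝ) < 2 * π := by positivity
  set T : ℝ × AddCircle (2 * π) := (a, (0 : AddCircle (2 * π))) with hT
  set U : ℝ × AddCircle (2 * π) := (b, (θ : AddCircle (2 * π))) with hU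
  set S := AddSubgroup.closure ({T, U} : Set (ℝ × AddCircle (2 * π))) with hS
  obtain ⟨q, hq⟩ := hab
  have hab' : a = (q : ℝ) * b := by field_simp at hq; linarith
  have hq0 : q ≠ 0 := by rintro rfl; simp at hab'; exact ha hab'
  set p : ℤ := q.num with hp
  set r : ℤ := (q.den : ℤ) with hr
  have hp0 : p ≠ 0 := Rat.num_ne_zero.mpr hq0
  have hr0 : r ≠ 0 := by simp [hr, q.den_nz]
  have hr' : (r : ℝ) ≠ 0 := Int.cast_ne_zero.mpr hr0
  have hkey : (r : ℝ) * a = (p : ℝ) * b := by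
    have : (q : ℝ) = (p : ℝ) / (r : ℝ) := by
      rw [Rat.cast_def]; push_cast [hp, hr]; ring
    rw [hab', this]
    field_simp
  constructor
  · -- not discrete
    intro hd
    set α : ℝ := ((-p : ℤ) : ℝ) * θ with hα
    -- the element W = r•T + (-p)•U = (0, α)
    have hW : (r • T + (-p) • U) ∈ S := by
      rw [hS, AddSubgroup.mem_closure_pair]
      exact ⟨r, -p, rfl⟩
    have hWval : r • T + (-p) • U
        = (((0 : ℝ), ((α : ℝ) : AddCircle (2 * π))) : ℝ × AddCircle (2 * π)) := by
      rw [hT, hU, Prod.ext_iff]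
      constructor
      · simp only [Prod.fst_add, Prod.smul_fst, zsmul_eq_mul]
        push_cast
        linarith [hkey]
      · simp only [Prod.snd_add, Prod.smul_snd, smul_zero, zero_add]
        rw [aux_coe_zsmul]
        norm_num [hα, zsmul_eq_mul]
    have hirr : ∀ s : ℚ, α ≠ (s : ℝ) * π := by
      intro s hcontra
      apply hθ
      refine ⟨-s / (p : ℚ), ?_⟩
      have hp' : (p : ℝ) ≠ 0 := Int.cast_ne_zero.mpr hp0
      have hcast : ((-s / (p : ℚ) : ℚ) : ℝ) = -(s : ℝ) / (p : ℝ) := by push_cast; ring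
      rw [hcast]
      rw [hα] at hcontra
      push_cast at hcontra
      field_simp
      linarith
    have hdense := aux_dense hirr
    -- from discreteness extract an open set
    have hopen : IsOpen ({0} : Set ↥S) := isOpen_discrete _
    rw [isOpen_induced_iff] at hopen
    obtain ⟨V, hVopen, hV⟩ := hopen
    have h0V : ((0 : ℝ), (0 : AddCircle (2 * π))) ∈ V := by
      have : (⟨0, S.zero_mem⟩ : ↥S) ∈ ({0} : Set ↥S) := rfl
      rw [← hV] at this
      exact this
    obtain ⟨V₁, V₂, hV₁, hV₂, h0V₁, h0V₂, hV₁₂⟩ := isOpen_prod_iff.mp hVopen 0 0 h0V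
    -- V₂ \ {0} is open and nonempty
    have hV₂' : IsOpen (V₂ \ {0}) := hV₂.sdiff isClosed_singleton
    have hne : (V₂ \ {0}).Nonempty := by
      by_contra hcon
      rw [Set.not_nonempty_iff_eq_empty, Set.diff_eq_empty] at hcon
      have hsing : V₂ = {0} := Set.Subset.antisymm hcon (by simpa using h0V₂)
      have hclopen : IsClopen ({0} : Set (AddCircle (2 * π))) :=
        ⟨isClosed_singleton, hsing ▸ hV₂⟩
      have huniv : ({0} : Set (AddCircle (2 * π))) = Set.univ :=
        hclopen.eq_univ ⟨0, rfl⟩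
      have hπ0 : ((π : ℝ) : AddCircle (2 * π)) = 0 := by
        have := Set.mem_univ ((π : ℝ) : AddCircle (2 * π))
        rw [← huniv] at this
        exact this
      rw [AddCircle.coe_eq_zero_iff] at hπ0
      obtain ⟨n, hn⟩ := hπ0
      rw [zsmul_eq_mul] at hn
      have hpi : π ≠ 0 := Real.pi_ne_zero
      have h2n : (2 * n : ℤ) = 1 := by
        have h' : (n : ℝ) * 2 = 1 := by nlinarith [Real.pi_pos, hn]
        have h'' : ((2 * n : ℤ) : ℝ) = 1 := by push_cast; linarith
        exact_mod_cast h''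
      omega
    obtain ⟨y, ⟨m, hmy⟩, hyV₂⟩ := hdense.exists_mem_open hV₂' hne
    obtain ⟨hyV₂', hy0⟩ := hyV₂
    -- the element (0, y) lies in S
    have hg : (((0 : ℝ), y) : ℝ × AddCircle (2 * π)) ∈ S := by
      have h1 := S.zsmul_mem hW m
      rw [hWval] at h1
      have h2 : m • ((((0 : ℝ), ((α : ℝ) : AddCircle (2 * π)))) : ℝ × AddCircle (2 * π))
          = (((0 : ℝ), y) : ℝ × AddCircle (2 * π)) := by
        rw [Prod.ext_iff]
        exact ⟨by simp, by simpa using hmy⟩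
      rwa [h2] at h1
    have hmem : (((0 : ℝ), y) : ℝ × AddCircle (2 * π)) ∈ V := hV₁₂ ⟨h0V₁, hyV₂'⟩
    have hpre : (⟨((0 : ℝ), y), hg⟩ : ↥S) ∈ Subtype.val ⁻¹' V := hmem
    rw [hV] at hpre
    have hzero : (((0 : ℝ), y) : ℝ × AddCircle (2 * π)) = 0 := Subtype.ext_iff.mp hpre
    apply hy0
    have := congrArg Prod.snd hzero
    simpa using this
  · -- isomorphic to ℤ²
    -- the homomorphism (m, n) ↦ m • T + n • U
    set φ : ℤ × ℤ →+ ℝ × AddCircle (2 * π) :=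
      AddMonoidHom.mk' (fun mn => mn.1 • T + mn.2 • U) (by
        intro x y
        simp only [Prod.fst_add, Prod.snd_add, add_zsmul]
        abel) with hφ
    have hinj : Function.Injective φ := by
      rw [injective_iff_map_eq_zero]
      intro x hx
      have hx1 : (x.1 : ℝ) * a + (x.2 : ℝ) * b = 0 := by
        have := congrArg Prod.fst hx
        simpa [hφ, hT, hU, zsmul_eq_mul] using this
      have hx2 : ((((x.2 : ℤ) : ℝ) * θ : ℝ) : AddCircle (2 * π)) = 0 := by
        have h := congrArg Prod.snd hx
        simp only [hφ, hT, hU, AddMonoidHom.mk'_apply, Prod.snd_add, Prod.smul_snd,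
          smul_zero, zero_add, Prod.snd_zero] at h
        rw [aux_coe_zsmul] at h
        simpa [zsmul_eq_mul] using h
      rw [AddCircle.coe_eq_zero_iff] at hx2
      obtain ⟨k, hk⟩ := hx2
      have hx20 : x.2 = 0 := by
        by_contra hx2ne
        exact hθ (aux_rat hx2ne (by rw [zsmul_eq_mul] at hk; linarith [hk]))
      have hx10 : x.1 = 0 := by
        rw [hx20] at hx1
        simp at hx1
        rcases hx1 with h | h
        · exact_mod_cast h
        · exact absurd h ha
      exact Prod.ext hx10 hx20
    have hrange : φ.range = S := by
      ext z
      rw [AddMonoidHom.mem_range, hS, AddSubgroup.mem_closure_pair]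
      constructor
      · rintro ⟨⟨m, n⟩, rfl⟩; exact ⟨m, n, rfl⟩
      · rintro ⟨m, n, rfl⟩; exact ⟨(m, n), rfl⟩
    exact ⟨(AddMonoidHom.ofInjective hinj).trans (AddEquiv.addSubgroupCongr hrange)⟩
end

section
/- For every unit complex number u = e^{iα}, the determinant of the 4×4 Hermitian matrix J_u equals -4(cos α + 1)²(2 cos α + 1)³. -/
open Complex

theorem det_fin_four' {R : Type*} [CommRing R] (A : Matrix (Fin 4) (Fin 4) R) :
    A.det = A 0 0 * (A 1 1 * (A 2 2 * A 3 3 - A 2 3 * A 3 2) - A 1 2 * (A 2 1 * A 3 3 - A 2 3 * A 3 1) + A 1 3 * (A 2 1 * A 3 2 - A 2 2 * A 3 1))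
      - A 0 1 * (A 1 0 * (A 2 2 * A 3 3 - A 2 3 * A 3 2) - A 1 2 * (A 2 0 * A 3 3 - A 2 3 * A 3 0) + A 1 3 * (A 2 0 * A 3 2 - A 2 2 * A 3 0))
      + A 0 2 * (A 1 0 * (A 2 1 * A 3 3 - A 2 3 * A 3 1) - A 1 1 * (A 2 0 * A 3 3 - A 2 3 * A 3 0) + A 1 3 * (A 2 0 * A 3 1 - A 2 1 * A 3 0))
      - A 0 3 * (A 1 0 * (A 2 1 * A 3 2 - A 2 2 * A 3 1) - A 1 1 * (A 2 0 * A 3 2 - A 2 2 * A 3 0) + A 1 2 * (A 2 0 * A 3 1 - A 2 1 * A 3 0)) := by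
  rw [Matrix.det_succ_row_zero, Fin.sum_univ_four]
  simp (config := { decide := true }) [Matrix.det_fin_three, Matrix.submatrix, Fin.succAbove,
    Fin.lt_def, show (Fin.succ 2 : Fin 4) = 3 from rfl, show (Fin.castSucc 2 : Fin 4) = 2 from rfl]
  ring

/-- The Hermitian matrix `J_u` (here `ū = conj u`). -/
noncomputable def Jmat (u : ℂ) : Matrix (Fin 4) (Fin 4) ℂ :=
  let c : ℂ := (starRingEnd ℂ) u
  !![1 + (u + c)/2, -1 - (u + c)/2, 1 + u, -3 - 2*(u + c) - c^2;
     -1 - (u + c)/2, 1 + (u + c)/2, -1 - u, 1 + u;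
     1 + c, -1 - c, 4 + 2*(u + c), -4 - 2*(u + c);
     -3 - 2*(u + c) - u^2, 1 + c, -4 - 2*(u + c), 4 + 2*(u + c)]

set_option maxHeartbeats 2000000 in
/-- For `u = e^{iα}`,
`det J_u = -4 (cos α + 1)² (2 cos α + 1)³`. -/
theorem stmt4 (α : ℝ) :
    (Jmat (Complex.exp (α * Complex.I))).det =
      -4 * ((Real.cos α : ℂ) + 1)^2 * (2 * (Real.cos α : ℂ) + 1)^3 := by
  have hconj : (starRingEnd ℂ) (Complex.exp (α * Complex.I)) =
      Complex.exp (-(α * Complex.I)) := by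
    rw [← Complex.exp_conj]
    congr 1
    simp [Complex.conj_I]
  have hcos : (Real.cos α : ℂ) =
      (Complex.exp (α * Complex.I) + Complex.exp (-(α * Complex.I))) / 2 := by
    rw [show -((α : ℂ) * Complex.I) = ((-α : ℝ) : ℂ) * Complex.I by push_cast; ring,
      Complex.exp_mul_I, Complex.exp_mul_I]
    push_cast
    rw [Complex.cos_neg, Complex.sin_neg]
    ring
  have hmul : Complex.exp (α * Complex.I) * Complex.exp (-(α * Complex.I)) = 1 := by
    rw [← Complex.exp_add]; simp
  set a := Complex.exp (α * Complex.I) with ha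
  set b := Complex.exp (-(α * Complex.I)) with hb
  rw [hcos, det_fin_four']
  simp [Jmat, hconj]
  linear_combination (8 + 14*b + 9*b^2 + 2*b^3 + 14*a + 13*a*b + 2*a*b^2 - a*b^3
    + 9*a^2 + 2*a^2*b - a^2*b^2 + 2*a^3 - a^3*b) * hmul
end
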